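/- Second derivative identity along trajectories for the special model: Let (ω, ρ) be a classical solution of the special model on [0,T) with flow map Φ. Then for every x ∈ (0,1), the function t ↦ log(1/Φ(x,t)) is twice differentiable on [0,T) and d²/dt² log(1/Φ(x,t)) = ∫_{Φ(x,t)}^{1} ω(y,t)²/y dy + ∫_{Φ(x,t)}^{1} ρ(y,t)/y² dy; in particular this second derivative is nonnegative. -/

import Mathlib

open MeasureTheory

/-- The Biot–Savart velocity of the special (sign-definite) model:
`u(x,t) = −x·∫_x^1 ω(y,t)/y dy`. -/
noncomputable def svel (ω : ℝ → ℝ → ℝ) (x t : ℝ) : ℝ :=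
  -(x * ∫ y in x..(1:ℝ), ω y t / y)

/-- A classical solution of the special model on `(0,1) × [0,T)`, with its flow map `Φ`. -/
structure IsClassicalSolutionSpecial (T : ℝ) (ω ρ Φ : ℝ → ℝ → ℝ) : Prop where
  Tpos : 0 < T
  omega_smooth : ContDiffOn ℝ 1 (fun p : ℝ × ℝ => ω p.1 p.2) (Set.Ioo 0 1 ×ˢ Set.Ico 0 T)
  rho_smooth : ContDiffOn ℝ 1 (fun p : ℝ × ℝ => ρ p.1 p.2) (Set.Ioo 0 1 ×ˢ Set.Ico 0 T)
  omega_nonneg : ∀ x t, 0 ≤ ω x t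
  rho_nonneg : ∀ x t, 0 ≤ ρ x t
  supp : ∀ t, 0 ≤ t → t < T → ∃ a b : ℝ, 0 < a ∧ a ≤ b ∧ b < 1 ∧
      ∀ x, x ∉ Set.Icc a b → ω x t = 0 ∧ ρ x t = 0
  omega_eq : ∀ x ∈ Set.Ioo (0:ℝ) 1, ∀ t, 0 ≤ t → t < T →
      derivWithin (fun s => ω x s) (Set.Ico 0 T) t
        + svel ω x t * deriv (fun y => ω y t) x = ρ x t / x
  rho_eq : ∀ x ∈ Set.Ioo (0:ℝ) 1, ∀ t, 0 ≤ t → t < T →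
      derivWithin (fun s => ρ x s) (Set.Ico 0 T) t
        + svel ω x t * deriv (fun y => ρ y t) x = 0
  flow_init : ∀ x ∈ Set.Ioo (0:ℝ) 1, Φ x 0 = x
  flow_deriv : ∀ x ∈ Set.Ioo (0:ℝ) 1, ∀ t, 0 ≤ t → t < T →
      HasDerivWithinAt (fun s => Φ x s) (svel ω (Φ x t) t) (Set.Ico 0 T) t
  flow_mono : ∀ t, 0 ≤ t → t < T → StrictMonoOn (fun x => Φ x t) (Set.Ioo 0 1)
  flow_bij : ∀ t, 0 ≤ t → t < T → Set.BijOn (fun x => Φ x t) (Set.Ioo 0 1) (Set.Ioo 0 1)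

open Set Filter Topology Function

/-!
Along a trajectory, `d/dt log (1/Φ) = -u(Φ)/Φ = ∫_Φ^1 ω/y`. Differentiating once more, the moving
lower limit contributes `-u(Φ) ω(Φ)/Φ = ω(Φ) ∫_Φ^1 ω/y`, while under the integral sign the vorticity
equation gives `∂ₜω/y = ρ/y² + (∫_y^1 ω/z) ∂_yω`; integrating the last term by parts produces
`∫_Φ^1 ω²/y` together with a boundary term that cancels the contribution of the moving limit.

Differentiation under the integral sign is legitimate because on a compact time window the supports
of `ω(·,t)` and `ρ(·,t)` stay below a fixed `β < 1`: `ρ` is transported, so `ω` is transported too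
wherever `ρ` vanishes, and the trajectory starting at the right end of the initial support stays
away from `1` on a compact time interval.
-/

section PartialDerivatives

variable {f : ℝ → ℝ → ℝ} {U s : Set ℝ} {y t : ℝ}

theorem hasDerivAt_of_hasFDerivWithinAt_uncurry {L : ℝ × ℝ →L[ℝ] ℝ}
    (hf : HasFDerivWithinAt (uncurry f) L (U ×ˢ s) (y, t)) (hU : U ∈ 𝓝 y) (ht : t ∈ s) :
    HasDerivAt (fun z => f z t) (L (1, 0)) y := by
  have hcurve : HasDerivWithinAt (fun z => (z, t)) ((1 : ℝ), (0 : ℝ)) U y :=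
    (hasDerivWithinAt_id y U).prodMk (hasDerivWithinAt_const y U t)
  have hmaps : MapsTo (fun z => (z, t)) U (U ×ˢ s) := fun _ hz => ⟨hz, ht⟩
  exact (hf.comp_hasDerivWithinAt y hcurve hmaps).hasDerivAt hU

theorem hasDerivWithinAt_of_hasFDerivWithinAt_uncurry {L : ℝ × ℝ →L[ℝ] ℝ}
    (hf : HasFDerivWithinAt (uncurry f) L (U ×ˢ s) (y, t)) (hy : y ∈ U) :
    HasDerivWithinAt (fun τ => f y τ) (L (0, 1)) s t := by
  have hcurve : HasDerivWithinAt (fun τ => (y, τ)) ((0 : ℝ), (1 : ℝ)) s t :=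
    (hasDerivWithinAt_const t s y).prodMk (hasDerivWithinAt_id t s)
  exact hf.comp_hasDerivWithinAt t hcurve fun _ hτ => ⟨hy, hτ⟩

theorem hasDerivAt_deriv_of_differentiableOn_uncurry
    (hf : DifferentiableOn ℝ (uncurry f) (U ×ˢ s)) (hU : IsOpen U) (hy : y ∈ U) (ht : t ∈ s) :
    HasDerivAt (fun z => f z t) (deriv (fun z => f z t) y) y :=
  (hasDerivAt_of_hasFDerivWithinAt_uncurry (hf (y, t) ⟨hy, ht⟩).hasFDerivWithinAt
    (hU.mem_nhds hy) ht).differentiableAt.hasDerivAt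

theorem hasDerivWithinAt_derivWithin_of_differentiableOn_uncurry
    (hf : DifferentiableOn ℝ (uncurry f) (U ×ˢ s)) (hy : y ∈ U) (ht : t ∈ s) :
    HasDerivWithinAt (fun τ => f y τ) (derivWithin (fun τ => f y τ) s t) s t :=
  (hasDerivWithinAt_of_hasFDerivWithinAt_uncurry (hf (y, t) ⟨hy, ht⟩).hasFDerivWithinAt
    hy).differentiableWithinAt.hasDerivWithinAt

theorem fderivWithin_uncurry_apply (hf : DifferentiableWithinAt ℝ (uncurry f) (U ×ˢ s) (y, t))
    (hU : U ∈ 𝓝 y) (hs : UniqueDiffWithinAt ℝ s t) (ht : t ∈ s) (v w : ℝ) :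
    fderivWithin ℝ (uncurry f) (U ×ˢ s) (y, t) (v, w)
      = v * deriv (fun z => f z t) y + w * derivWithin (fun τ => f y τ) s t := by
  have hL := hf.hasFDerivWithinAt
  rw [(hasDerivAt_of_hasFDerivWithinAt_uncurry hL hU ht).deriv,
    (hasDerivWithinAt_of_hasFDerivWithinAt_uncurry hL (mem_of_mem_nhds hU)).derivWithin hs,
    show ((v, w) : ℝ × ℝ) = v • ((1 : ℝ), (0 : ℝ)) + w • ((0 : ℝ), (1 : ℝ)) by simp,
    map_add, map_smul, map_smul, smul_eq_mul, smul_eq_mul]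

theorem hasDerivWithinAt_uncurry_comp (hf : DifferentiableOn ℝ (uncurry f) (U ×ˢ s))
    (hU : IsOpen U) (hs : UniqueDiffOn ℝ s) {γ : ℝ → ℝ} {v : ℝ} (hγ : HasDerivWithinAt γ v s t)
    (hγU : MapsTo γ s U) (ht : t ∈ s) :
    HasDerivWithinAt (fun τ => f (γ τ) τ)
      (v * deriv (fun z => f z t) (γ t) + derivWithin (fun τ => f (γ t) τ) s t) s t := by
  have hmem : (γ t, t) ∈ U ×ˢ s := ⟨hγU ht, ht⟩
  have hcurve : HasDerivWithinAt (fun τ => (γ τ, τ)) (v, (1 : ℝ)) s t :=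
    hγ.prodMk (hasDerivWithinAt_id t s)
  have hmaps : MapsTo (fun τ => (γ τ, τ)) s (U ×ˢ s) := fun _ hτ => ⟨hγU hτ, hτ⟩
  have h := (hf _ hmem).hasFDerivWithinAt.comp_hasDerivWithinAt (f := fun τ => (γ τ, τ)) t
    hcurve hmaps
  rwa [fderivWithin_uncurry_apply (hf _ hmem) (hU.mem_nhds (hγU ht)) (hs t ht) ht, one_mul] at h

theorem continuousOn_deriv_fst (hf : ContDiffOn ℝ 1 (uncurry f) (U ×ˢ s)) (hU : IsOpen U)
    (hs : UniqueDiffOn ℝ s) :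
    ContinuousOn (uncurry fun y t => deriv (fun z => f z t) y) (U ×ˢ s) := by
  refine ((hf.continuousOn_fderivWithin (hU.uniqueDiffOn.prod hs) le_rfl).clm_apply
    (continuousOn_const (c := ((1 : ℝ), (0 : ℝ))))).congr fun p hp => ?_
  simp [uncurry, fderivWithin_uncurry_apply ((hf.differentiableOn one_ne_zero) p hp)
    (hU.mem_nhds hp.1) (hs _ hp.2) hp.2]

theorem continuousOn_derivWithin_snd (hf : ContDiffOn ℝ 1 (uncurry f) (U ×ˢ s))
    (hU : IsOpen U) (hs : UniqueDiffOn ℝ s) :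
    ContinuousOn (uncurry fun y t => derivWithin (fun τ => f y τ) s t) (U ×ˢ s) := by
  refine ((hf.continuousOn_fderivWithin (hU.uniqueDiffOn.prod hs) le_rfl).clm_apply
    (continuousOn_const (c := ((0 : ℝ), (1 : ℝ))))).congr fun p hp => ?_
  simp [uncurry, fderivWithin_uncurry_apply ((hf.differentiableOn one_ne_zero) p hp)
    (hU.mem_nhds hp.1) (hs _ hp.2) hp.2]

end PartialDerivatives

theorem eq_of_hasDerivWithinAt_Ico_zero {g : ℝ → ℝ} {a b t : ℝ}
    (h : ∀ s ∈ Ico a b, HasDerivWithinAt g 0 (Ico a b) s) (ht : t ∈ Ico a b) : g t = g a :=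
  constant_of_has_deriv_right_zero
    (fun s hs => (h s ⟨hs.1, hs.2.trans_lt ht.2⟩).continuousWithinAt.mono
      (Icc_subset_Ico_right ht.2))
    (fun s hs => (h s ⟨hs.1, hs.2.trans ht.2⟩).mono_of_mem_nhdsWithin
      (Ico_mem_nhdsGE_of_mem ⟨hs.1, hs.2.trans ht.2⟩))
    t ⟨ht.1, le_rfl⟩

theorem intervalIntegral.integral_eq_of_eq_zero_on {g : ℝ → ℝ} {a b c : ℝ}
    (hg : IntervalIntegrable g volume a b) (hzero : ∀ y ∈ uIcc b c, g y = 0) :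
    ∫ y in a..c, g y = ∫ y in a..b, g y := by
  have hzero' : EqOn g (fun _ => 0) (uIcc b c) := hzero
  rw [← intervalIntegral.integral_add_adjacent_intervals hg
    (continuousOn_const.congr hzero').intervalIntegrable, intervalIntegral.integral_congr hzero']
  simp

theorem integral_primitive_div_mul_deriv {w w' : ℝ → ℝ} {a b : ℝ} (ha : 0 < a) (hab : a ≤ b)
    (hw : ∀ y ∈ Icc a b, HasDerivAt w (w' y) y) (hw' : ContinuousOn w' (Icc a b))
    (hwb : w b = 0) :
    ∫ y in a..b, (∫ z in y..b, w z / z) * w' y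
      = (∫ y in a..b, w y ^ 2 / y) - (∫ z in a..b, w z / z) * w a := by
  have hwc : ContinuousOn w (Icc a b) := fun y hy => (hw y hy).continuousAt.continuousWithinAt
  have hq : ContinuousOn (fun z => w z / z) (Icc a b) :=
    hwc.div continuousOn_id fun z hz => (ha.trans_le hz.1).ne'
  have hIoo : Ioo (min a b) (max a b) = Ioo a b := by simp [hab]
  have hqi : IntervalIntegrable (fun z => w z / z) volume a b :=
    (hq.mono (uIcc_of_le hab).subset).intervalIntegrable
  have hprim : ∀ y ∈ Ioo a b, HasDerivAt (fun y => ∫ z in y..b, w z / z) (-(w y / y)) y :=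
    fun y hy => intervalIntegral.integral_hasDerivAt_left
      (hqi.mono_set (by simp [uIcc_of_le hab, uIcc_of_le hy.2.le, Icc_subset_Icc_left hy.1.le]))
      ((hq.mono Ioo_subset_Icc_self).stronglyMeasurableAtFilter isOpen_Ioo y hy)
      (hq.continuousAt (Icc_mem_nhds hy.1 hy.2))
  rw [intervalIntegral.integral_mul_deriv_eq_deriv_mul_of_hasDerivAt
      (intervalIntegral.continuousOn_primitive_interval_left
        ((hq.mono (uIcc_of_le hab).subset).integrableOn_compact isCompact_uIcc))
      (hwc.mono (uIcc_of_le hab).subset)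
      (hIoo ▸ hprim) (hIoo ▸ fun y hy => hw y (Ioo_subset_Icc_self hy)) hqi.neg
      (hw'.mono (uIcc_of_le hab).subset).intervalIntegrable,
    intervalIntegral.integral_same, hwb, zero_mul, zero_sub, sub_eq_add_neg,
    ← intervalIntegral.integral_neg, neg_add_eq_sub, sub_left_inj]
  refine intervalIntegral.integral_congr fun y _ => ?_
  simp only [Pi.neg_apply, neg_mul, neg_neg]
  ring

theorem hasDerivWithinAt_intervalIntegral_of_continuousOn_deriv {f f' : ℝ → ℝ → ℝ}
    {K : Set ℝ} {a b t₀ : ℝ} (hK : IsCompact K) (hKc : Convex ℝ K) (ht₀ : t₀ ∈ K)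
    (hfi : ∀ t ∈ K, IntervalIntegrable (fun y => f y t) volume a b)
    (hf : ∀ y ∈ uIcc a b, ∀ t ∈ K, HasDerivWithinAt (fun τ => f y τ) (f' y t) K t)
    (hf' : ContinuousOn (uncurry f') (uIcc a b ×ˢ K)) :
    HasDerivWithinAt (fun t => ∫ y in a..b, f y t) (∫ y in a..b, f' y t₀) K t₀ := by
  rw [hasDerivWithinAt_iff_isLittleO, Asymptotics.isLittleO_iff]
  intro C hC
  set ε := C / (|b - a| + 1)
  have hε : 0 < ε := by positivity
  obtain ⟨δ, hδ, hunif⟩ := Metric.uniformContinuousOn_iff.1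
    ((isCompact_uIcc.prod hK).uniformContinuousOn_of_continuous hf') ε hε
  have hpoint : ∀ t ∈ K ∩ Metric.ball t₀ δ, ∀ y ∈ uIcc a b,
      ‖f y t - f y t₀ - (t - t₀) * f' y t₀‖ ≤ ε * |t - t₀| := by
    intro t ht y hy
    have hderiv : ∀ τ ∈ K ∩ Metric.ball t₀ δ, HasDerivWithinAt (fun τ => f y τ - τ * f' y t₀)
        (f' y τ - f' y t₀) (K ∩ Metric.ball t₀ δ) τ := fun τ hτ =>
      ((hf y hy τ hτ.1).sub (by simpa using (hasDerivWithinAt_id τ K).mul_const (f' y t₀))).mono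
        inter_subset_left
    have hbound : ∀ τ ∈ K ∩ Metric.ball t₀ δ, ‖f' y τ - f' y t₀‖ ≤ ε := fun τ hτ =>
      (hunif (y, τ) ⟨hy, hτ.1⟩ (y, t₀) ⟨hy, ht₀⟩ (by simpa [Prod.dist_eq] using hτ.2)).le
    have := (hKc.inter (convex_ball t₀ δ)).norm_image_sub_le_of_norm_hasDerivWithin_le hderiv
      hbound ⟨ht₀, Metric.mem_ball_self hδ⟩ ht
    simp only [Real.norm_eq_abs] at this ⊢
    convert this using 2
    ring
  have hint' : IntervalIntegrable (fun y => f' y t₀) volume a b :=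
    (hf'.uncurry_right t₀ ht₀).intervalIntegrable
  filter_upwards [self_mem_nhdsWithin, nhdsWithin_le_nhds (Metric.ball_mem_nhds t₀ hδ)]
    with t htK htδ
  rw [← intervalIntegral.integral_sub (hfi t htK) (hfi t₀ ht₀), smul_eq_mul,
    ← intervalIntegral.integral_const_mul, ← intervalIntegral.integral_sub
      ((hfi t htK).sub (hfi t₀ ht₀)) (hint'.const_mul _)]
  calc ‖∫ y in a..b, (f y t - f y t₀ - (t - t₀) * f' y t₀)‖
      ≤ ε * |t - t₀| * |b - a| := intervalIntegral.norm_integral_le_of_norm_le_const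
        fun y hy => hpoint t ⟨htK, htδ⟩ y (uIoc_subset_uIcc hy)
    _ ≤ C * ‖t - t₀‖ := by
      rw [Real.norm_eq_abs, mul_right_comm]
      gcongr
      rw [div_mul_eq_mul_div, div_le_iff₀ (by positivity)]
      nlinarith [abs_nonneg (b - a)]

theorem hasDerivWithinAt_intervalIntegral_upper_curve {g : ℝ → ℝ → ℝ} {γ : ℝ → ℝ} {γ' : ℝ}
    {U s : Set ℝ} {t₀ : ℝ} (hU : IsOpen U) (hγ₀ : γ t₀ ∈ U) (ht₀ : t₀ ∈ s)
    (hg : ContinuousOn (uncurry g) (U ×ˢ s)) (hγ : HasDerivWithinAt γ γ' s t₀) :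
    HasDerivWithinAt (fun t => ∫ y in γ t₀..γ t, g y t) (γ' * g (γ t₀) t₀) s t₀ := by
  set c₀ := g (γ t₀) t₀
  have hrem : (fun t => (∫ y in γ t₀..γ t, g y t) - (γ t - γ t₀) * c₀)
      =o[𝓝[s] t₀] fun t => γ t - γ t₀ := by
    rw [Asymptotics.isLittleO_iff]
    intro ε hε
    obtain ⟨r, hr, hrU⟩ := Metric.isOpen_iff.1 hU (γ t₀) hγ₀
    obtain ⟨δ, hδ, hcont⟩ := Metric.continuousWithinAt_iff.1 (hg (γ t₀, t₀) ⟨hγ₀, ht₀⟩) ε hε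
    filter_upwards [self_mem_nhdsWithin, nhdsWithin_le_nhds (Metric.ball_mem_nhds t₀ hδ),
      Metric.tendsto_nhds.1 hγ.continuousWithinAt _ (lt_min hr hδ)] with t hts htδ hγt
    have hseg : ∀ y ∈ uIcc (γ t₀) (γ t), dist y (γ t₀) < min r δ := fun y hy =>
      (abs_sub_left_of_mem_uIcc hy).trans_lt hγt
    have hint : IntervalIntegrable (fun y => g y t) volume (γ t₀) (γ t) :=
      ((hg.uncurry_right t hts).mono fun y hy =>
        hrU (Metric.mem_ball.2 ((hseg y hy).trans_le (min_le_left r δ)))).intervalIntegrable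
    have hpoint : ∀ y ∈ uIoc (γ t₀) (γ t), ‖g y t - c₀‖ ≤ ε := fun y hy => by
      have hy := hseg y (uIoc_subset_uIcc hy)
      have hyU : y ∈ U := hrU (Metric.mem_ball.2 (hy.trans_le (min_le_left r δ)))
      exact (hcont (x := (y, t)) ⟨hyU, hts⟩ (max_lt (hy.trans_le (min_le_right r δ)) htδ)).le
    calc ‖(∫ y in γ t₀..γ t, g y t) - (γ t - γ t₀) * c₀‖
        = ‖∫ y in γ t₀..γ t, (g y t - c₀)‖ := by
          rw [intervalIntegral.integral_sub hint intervalIntegrable_const,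
            intervalIntegral.integral_const, smul_eq_mul]
      _ ≤ ε * ‖γ t - γ t₀‖ := intervalIntegral.norm_integral_le_of_norm_le_const hpoint
  rw [hasDerivWithinAt_iff_isLittleO]
  refine ((hrem.trans_isBigO (HasFDerivWithinAt.isBigO_sub hγ)).add
    ((hasDerivWithinAt_iff_isLittleO.1 hγ).const_mul_left c₀)).congr' ?_ EventuallyEq.rfl
  filter_upwards with t
  simp only [intervalIntegral.integral_same, smul_eq_mul]
  ring

namespace IsClassicalSolutionSpecial

variable {T : ℝ} {ω ρ Φ : ℝ → ℝ → ℝ} {x t : ℝ}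

theorem flow_mem (hsol : IsClassicalSolutionSpecial T ω ρ Φ) (hx : x ∈ Ioo 0 1)
    (ht : t ∈ Ico 0 T) : Φ x t ∈ Ioo 0 1 :=
  (hsol.flow_bij t ht.1 ht.2).mapsTo hx

theorem continuousOn_omega (hsol : IsClassicalSolutionSpecial T ω ρ Φ) (ht : t ∈ Ico 0 T) :
    ContinuousOn (fun y => ω y t) (Ioo 0 1) :=
  hsol.omega_smooth.continuousOn.uncurry_right (f := ω) t ht

theorem continuousOn_rho (hsol : IsClassicalSolutionSpecial T ω ρ Φ) (ht : t ∈ Ico 0 T) :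
    ContinuousOn (fun y => ρ y t) (Ioo 0 1) :=
  hsol.rho_smooth.continuousOn.uncurry_right (f := ρ) t ht

theorem hasDerivWithinAt_comp_flow (hsol : IsClassicalSolutionSpecial T ω ρ Φ)
    {f : ℝ → ℝ → ℝ} (hf : ContDiffOn ℝ 1 (fun p : ℝ × ℝ => f p.1 p.2) (Ioo 0 1 ×ˢ Ico 0 T))
    (hx : x ∈ Ioo 0 1) (ht : t ∈ Ico 0 T) :
    HasDerivWithinAt (fun s => f (Φ x s) s)
      (svel ω (Φ x t) t * deriv (fun z => f z t) (Φ x t)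
        + derivWithin (fun s => f (Φ x t) s) (Ico 0 T) t) (Ico 0 T) t :=
  hasDerivWithinAt_uncurry_comp (hf.differentiableOn one_ne_zero) isOpen_Ioo (uniqueDiffOn_Ico 0 T)
    (hsol.flow_deriv x hx t ht.1 ht.2) (fun _ hs => hsol.flow_mem hx hs) ht

theorem hasDerivWithinAt_rho_comp_flow (hsol : IsClassicalSolutionSpecial T ω ρ Φ)
    (hx : x ∈ Ioo 0 1) (ht : t ∈ Ico 0 T) :
    HasDerivWithinAt (fun s => ρ (Φ x s) s) 0 (Ico 0 T) t := by
  have h := hsol.hasDerivWithinAt_comp_flow hsol.rho_smooth hx ht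
  rwa [add_comm, hsol.rho_eq _ (hsol.flow_mem hx ht) t ht.1 ht.2] at h

theorem hasDerivWithinAt_omega_comp_flow (hsol : IsClassicalSolutionSpecial T ω ρ Φ)
    (hx : x ∈ Ioo 0 1) (ht : t ∈ Ico 0 T) :
    HasDerivWithinAt (fun s => ω (Φ x s) s) (ρ (Φ x t) t / Φ x t) (Ico 0 T) t := by
  have h := hsol.hasDerivWithinAt_comp_flow hsol.omega_smooth hx ht
  rwa [add_comm, hsol.omega_eq _ (hsol.flow_mem hx ht) t ht.1 ht.2] at h

theorem comp_flow_eq_zero (hsol : IsClassicalSolutionSpecial T ω ρ Φ) (hx : x ∈ Ioo 0 1)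
    (hω : ω x 0 = 0) (hρ : ρ x 0 = 0) (ht : t ∈ Ico 0 T) :
    ω (Φ x t) t = 0 ∧ ρ (Φ x t) t = 0 := by
  have hρt : ∀ s ∈ Ico 0 T, ρ (Φ x s) s = 0 := fun s hs => by
    rw [eq_of_hasDerivWithinAt_Ico_zero (g := fun s => ρ (Φ x s) s)
      (fun s hs => hsol.hasDerivWithinAt_rho_comp_flow hx hs) hs, hsol.flow_init x hx, hρ]
  refine ⟨?_, hρt t ht⟩
  rw [eq_of_hasDerivWithinAt_Ico_zero (g := fun s => ω (Φ x s) s) (fun s hs => ?_) ht,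
    hsol.flow_init x hx, hω]
  simpa [hρt s hs] using hsol.hasDerivWithinAt_omega_comp_flow hx hs

theorem exists_forall_ge_eq_zero (hsol : IsClassicalSolutionSpecial T ω ρ Φ) {t₁ : ℝ}
    (ht₁ : t₁ ∈ Ico 0 T) :
    ∃ β < 1, ∀ τ ∈ Icc 0 t₁, ∀ y, β ≤ y → ω y τ = 0 ∧ ρ y τ = 0 := by
  obtain ⟨a, b, ha, hab, hb, hsupp⟩ := hsol.supp 0 le_rfl hsol.Tpos
  have hb01 : b ∈ Ioo 0 1 := ⟨ha.trans_le hab, hb⟩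
  have hIcc : Icc 0 t₁ ⊆ Ico 0 T := Icc_subset_Ico_right ht₁.2
  obtain ⟨s₀, hs₀, hmax⟩ := isCompact_Icc.exists_isMaxOn (nonempty_Icc.2 ht₁.1)
    fun s hs => (hsol.flow_deriv b hb01 s (hIcc hs).1 (hIcc hs).2).continuousWithinAt.mono hIcc
  have hM := hsol.flow_mem hb01 (hIcc hs₀)
  refine ⟨(Φ b s₀ + 1) / 2, by linarith [hM.2], fun τ hτ y hy => ?_⟩
  have hτT := hIcc hτ
  rcases lt_or_ge y 1 with hy1 | hy1
  · obtain ⟨z, hz, rfl⟩ := (hsol.flow_bij τ hτT.1 hτT.2).surjOn ⟨by linarith [hM.1], hy1⟩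
    have hbz : b < z := by
      by_contra! hzb
      have hle := (hsol.flow_mono τ hτT.1 hτT.2).monotoneOn hz hb01 hzb
      have hmaxτ : Φ b τ ≤ Φ b s₀ := hmax hτ
      linarith
    have hz0 := hsupp z fun hz' => hbz.not_ge hz'.2
    exact hsol.comp_flow_eq_zero hz hz0.1 hz0.2 hτT
  · obtain ⟨_, b', _, _, hb', hsupp'⟩ := hsol.supp τ hτT.1 hτT.2
    exact hsupp' y fun hy' => by linarith [hy'.2]

theorem hasDerivWithinAt_log_inv_flow (hsol : IsClassicalSolutionSpecial T ω ρ Φ)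
    (hx : x ∈ Ioo 0 1) (ht : t ∈ Ico 0 T) :
    HasDerivWithinAt (fun r => Real.log (1 / Φ x r)) (∫ y in Φ x t..1, ω y t / y) (Ico 0 T) t := by
  have hpos := (hsol.flow_mem hx ht).1
  have hval : -(svel ω (Φ x t) t / Φ x t) = ∫ y in Φ x t..1, ω y t / y := by
    unfold svel
    field_simp
  have h : HasDerivWithinAt (fun r => -Real.log (Φ x r)) _ (Ico 0 T) t :=
    ((hsol.flow_deriv x hx t ht.1 ht.2).log hpos.ne').neg
  simpa only [hval, one_div, Real.log_inv] using h

theorem intervalIntegrable_omega_div (hsol : IsClassicalSolutionSpecial T ω ρ Φ)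
    (ht : t ∈ Ico 0 T) {a b : ℝ} (ha : a ∈ Ioo 0 1) (hb : b ∈ Ioo 0 1) :
    IntervalIntegrable (fun y => ω y t / y) volume a b :=
  (((hsol.continuousOn_omega ht).div continuousOn_id fun _ hy => hy.1.ne').mono
    (ordConnected_Ioo.uIcc_subset ha hb)).intervalIntegrable

theorem derivWithin_omega_div_eq (hsol : IsClassicalSolutionSpecial T ω ρ Φ) {y : ℝ}
    (hy : y ∈ Ioo 0 1) (ht : t ∈ Ico 0 T) :
    derivWithin (fun s => ω y s) (Ico 0 T) t / y
      = ρ y t / y ^ 2 + (∫ z in y..1, ω z t / z) * deriv (fun z => ω z t) y := by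
  rw [eq_sub_of_add_eq (hsol.omega_eq y hy t ht.1 ht.2), svel]
  field_simp [hy.1.ne']
  ring

theorem integral_derivWithin_div_sub_svel_mul (hsol : IsClassicalSolutionSpecial T ω ρ Φ)
    {a b : ℝ} (ht : t ∈ Ico 0 T) (ha : a ∈ Ioo 0 1) (hab : a ≤ b) (hb : b < 1)
    (hvan : ∀ y, b ≤ y → ω y t = 0 ∧ ρ y t = 0) :
    (∫ y in a..b, derivWithin (fun s => ω y s) (Ico 0 T) t / y) - svel ω a t * (ω a t / a)
      = (∫ y in a..1, ω y t ^ 2 / y) + ∫ y in a..1, ρ y t / y ^ 2 := by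
  have hsub : uIcc a b ⊆ Ioo 0 1 := ordConnected_Ioo.uIcc_subset ha ⟨ha.1.trans_le hab, hb⟩
  have hb1 : uIcc b 1 = Icc b 1 := uIcc_of_le hb.le
  have hωq : ContinuousOn (fun y => ω y t / y) (Ioo 0 1) :=
    (hsol.continuousOn_omega ht).div continuousOn_id fun y hy => hy.1.ne'
  have hω2 : ContinuousOn (fun y => ω y t ^ 2 / y) (Ioo 0 1) :=
    ((hsol.continuousOn_omega ht).pow 2).div continuousOn_id fun y hy => hy.1.ne'
  have hρq : ContinuousOn (fun y => ρ y t / y ^ 2) (uIcc a b) :=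
    ((hsol.continuousOn_rho ht).div (continuousOn_id.pow 2) fun y hy =>
      (pow_pos hy.1 2).ne').mono hsub
  have hI : ∀ y ∈ uIcc a b, ∫ z in y..1, ω z t / z = ∫ z in y..b, ω z t / z := fun y hy =>
    intervalIntegral.integral_eq_of_eq_zero_on
      (hsol.intervalIntegrable_omega_div ht (hsub hy) (hsub right_mem_uIcc))
      fun z hz => by simp [(hvan z (hb1 ▸ hz).1).1]
  have hpoint : EqOn (fun y => derivWithin (fun s => ω y s) (Ico 0 T) t / y)
      (fun y => ρ y t / y ^ 2 + (∫ z in y..b, ω z t / z) * deriv (fun z => ω z t) y)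
      (uIcc a b) := fun y hy => by
    simp only
    rw [hsol.derivWithin_omega_div_eq (hsub hy) ht, hI y hy]
  have hderiv : ContinuousOn (fun y => deriv (fun z => ω z t) y) (uIcc a b) :=
    ((continuousOn_deriv_fst (f := ω) hsol.omega_smooth isOpen_Ioo
      (uniqueDiffOn_Ico 0 T)).uncurry_right t ht).mono hsub
  have hprim : ContinuousOn (fun y => ∫ z in y..b, ω z t / z) (uIcc a b) :=
    intervalIntegral.continuousOn_primitive_interval_left
      ((hωq.mono hsub).integrableOn_compact isCompact_uIcc)
  have hw : ∀ y ∈ Icc a b, HasDerivAt (fun z => ω z t) (deriv (fun z => ω z t) y) y :=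
    fun y hy => hasDerivAt_deriv_of_differentiableOn_uncurry (f := ω)
      (hsol.omega_smooth.differentiableOn one_ne_zero) isOpen_Ioo (hsub (uIcc_of_le hab ▸ hy)) ht
  have hprod : IntervalIntegrable
      (fun y => (∫ z in y..b, ω z t / z) * deriv (fun z => ω z t) y) volume a b :=
    (hprim.mul hderiv).intervalIntegrable
  rw [intervalIntegral.integral_congr hpoint,
    intervalIntegral.integral_add hρq.intervalIntegrable hprod,
    integral_primitive_div_mul_deriv ha.1 hab hw (uIcc_of_le hab ▸ hderiv) (hvan b le_rfl).1,
    intervalIntegral.integral_eq_of_eq_zero_on (c := 1) (hω2.mono hsub).intervalIntegrable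
      fun y hy => by simp [(hvan y (hb1 ▸ hy).1).1],
    intervalIntegral.integral_eq_of_eq_zero_on (c := 1) hρq.intervalIntegrable
      fun y hy => by simp [(hvan y (hb1 ▸ hy).1).2],
    svel, hI a left_mem_uIcc]
  field_simp [ha.1.ne']
  ring

theorem hasDerivWithinAt_integral_omega_div (hsol : IsClassicalSolutionSpecial T ω ρ Φ)
    {a b : ℝ} (ha : a ∈ Ioo 0 1) (hb : b ∈ Ioo 0 1) (ht : t ∈ Ico 0 T) :
    HasDerivWithinAt (fun s => ∫ y in a..b, ω y s / y)
      (∫ y in a..b, derivWithin (fun s => ω y s) (Ico 0 T) t / y) (Ico 0 T) t := by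
  obtain ⟨t₁, htt₁, ht₁T⟩ := exists_between ht.2
  have hK : Icc 0 t₁ ⊆ Ico 0 T := Icc_subset_Ico_right ht₁T
  have hKnhds : Icc 0 t₁ ∈ 𝓝[Ico 0 T] t :=
    mem_nhdsWithin.2 ⟨Iio t₁, isOpen_Iio, htt₁, fun s hs => ⟨hs.2.1, hs.1.le⟩⟩
  have hsub : uIcc a b ⊆ Ioo 0 1 := ordConnected_Ioo.uIcc_subset ha hb
  refine (hasDerivWithinAt_intervalIntegral_of_continuousOn_deriv
    (f' := fun y τ => derivWithin (fun s => ω y s) (Ico 0 T) τ / y) isCompact_Icc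
    (convex_Icc 0 t₁) ⟨ht.1, htt₁.le⟩ (fun τ hτ => hsol.intervalIntegrable_omega_div (hK hτ) ha hb)
    (fun y hy τ hτ => ?_) ?_).mono_of_mem_nhdsWithin hKnhds
  · exact ((hasDerivWithinAt_derivWithin_of_differentiableOn_uncurry (f := ω)
      (hsol.omega_smooth.differentiableOn one_ne_zero) (hsub hy) (hK hτ)).mono hK).div_const y
  · exact ((continuousOn_derivWithin_snd (f := ω) hsol.omega_smooth isOpen_Ioo
      (uniqueDiffOn_Ico 0 T)).mono (prod_mono hsub hK)).div continuous_fst.continuousOn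
        fun p hp => (hsub hp.1).1.ne'

theorem hasDerivWithinAt_integral_flow (hsol : IsClassicalSolutionSpecial T ω ρ Φ)
    (hx : x ∈ Ioo 0 1) (ht : t ∈ Ico 0 T) :
    HasDerivWithinAt (fun s => ∫ y in Φ x s..1, ω y s / y)
      ((∫ y in Φ x t..1, ω y t ^ 2 / y) + ∫ y in Φ x t..1, ρ y t / y ^ 2) (Ico 0 T) t := by
  obtain ⟨t₁, htt₁, ht₁T⟩ := exists_between ht.2
  have hK : Icc 0 t₁ ⊆ Ico 0 T := Icc_subset_Ico_right ht₁T
  have htK : t ∈ Icc 0 t₁ := ⟨ht.1, htt₁.le⟩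
  have hKnhds : Icc 0 t₁ ∈ 𝓝[Ico 0 T] t :=
    mem_nhdsWithin.2 ⟨Iio t₁, isOpen_Iio, htt₁, fun s hs => ⟨hs.2.1, hs.1.le⟩⟩
  obtain ⟨β, hβ, hvan⟩ := hsol.exists_forall_ge_eq_zero ⟨ht.1.trans htt₁.le, ht₁T⟩
  have ha := hsol.flow_mem hx ht
  set b := max β (Φ x t)
  have hb : b ∈ Ioo 0 1 := ⟨ha.1.trans_le (le_max_right _ _), max_lt hβ ha.2⟩
  have hmoving : HasDerivWithinAt (fun s => ∫ y in Φ x t..Φ x s, ω y s / y)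
      (svel ω (Φ x t) t * (ω (Φ x t) t / Φ x t)) (Ico 0 T) t :=
    hasDerivWithinAt_intervalIntegral_upper_curve (g := fun y s => ω y s / y) isOpen_Ioo ha ht
      (hsol.omega_smooth.continuousOn.div continuous_fst.continuousOn fun p hp => hp.1.1.ne')
      (hsol.flow_deriv x hx t ht.1 ht.2)
  have hsplit : ∀ s ∈ Icc 0 t₁, ∫ y in Φ x s..1, ω y s / y
      = (∫ y in Φ x t..b, ω y s / y) - ∫ y in Φ x t..Φ x s, ω y s / y := fun s hs => by
    have has := hsol.flow_mem hx (hK hs)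
    rw [intervalIntegral.integral_interval_sub_left
      (hsol.intervalIntegrable_omega_div (hK hs) ha hb)
      (hsol.intervalIntegrable_omega_div (hK hs) ha has)]
    refine intervalIntegral.integral_eq_of_eq_zero_on
      (hsol.intervalIntegrable_omega_div (hK hs) has hb) fun y hy => ?_
    simp [(hvan s hs y ((le_max_left _ _).trans (uIcc_of_le hb.2.le ▸ hy).1)).1]
  rw [← hsol.integral_derivWithin_div_sub_svel_mul ht ha (le_max_right _ _) hb.2
    fun y hy => hvan t htK y ((le_max_left _ _).trans hy)]
  exact ((hsol.hasDerivWithinAt_integral_omega_div ha hb ht).sub hmoving).congr_of_eventuallyEq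
    (eventually_of_mem hKnhds hsplit) (hsplit t htK)

end IsClassicalSolutionSpecial

theorem second_derivative_identity (T : ℝ) (ω ρ Φ : ℝ → ℝ → ℝ)
    (hsol : IsClassicalSolutionSpecial T ω ρ Φ) :
    ∀ x ∈ Set.Ioo (0:ℝ) 1, ∀ t, 0 ≤ t → t < T →
      HasDerivWithinAt (fun r => Real.log (1 / Φ x r))
        (derivWithin (fun r => Real.log (1 / Φ x r)) (Set.Ico 0 T) t) (Set.Ico 0 T) t ∧
      HasDerivWithinAt
        (fun s => derivWithin (fun r => Real.log (1 / Φ x r)) (Set.Ico 0 T) s)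
        ((∫ y in (Φ x t)..(1:ℝ), (ω y t) ^ 2 / y) + ∫ y in (Φ x t)..(1:ℝ), ρ y t / y ^ 2)
        (Set.Ico 0 T) t ∧
      0 ≤ (∫ y in (Φ x t)..(1:ℝ), (ω y t) ^ 2 / y) + ∫ y in (Φ x t)..(1:ℝ), ρ y t / y ^ 2 := by
  intro x hx t ht0 htT
  have ht : t ∈ Ico 0 T := ⟨ht0, htT⟩
  have hfirst := fun s (hs : s ∈ Ico 0 T) => hsol.hasDerivWithinAt_log_inv_flow hx hs
  have hderivWithin : ∀ s ∈ Ico 0 T, derivWithin (fun r => Real.log (1 / Φ x r)) (Ico 0 T) s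
      = ∫ y in Φ x s..1, ω y s / y := fun s hs =>
    (hfirst s hs).derivWithin (uniqueDiffOn_Ico 0 T s hs)
  have ha := hsol.flow_mem hx ht
  refine ⟨(hfirst t ht).differentiableWithinAt.hasDerivWithinAt,
    (hsol.hasDerivWithinAt_integral_flow hx ht).congr hderivWithin (hderivWithin t ht),
    add_nonneg ?_ ?_⟩
  · exact intervalIntegral.integral_nonneg ha.2.le fun y hy =>
      div_nonneg (sq_nonneg _) (ha.1.le.trans hy.1)
  · exact intervalIntegral.integral_nonneg ha.2.le fun y _ =>
      div_nonneg (hsol.rho_nonneg y t) (sq_nonneg y)
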